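/- arXiv:1302.5872 — 9 statements merged into one kernel-verified Lean document; each statement's English description precedes it below -/
import Mathlib

section
/- Let M be a type of messages, V an additive commutative group, n ≥ 1, and c : M → Fin n → V a base code. Let α ≥ 1, and let g : Fin α → Fin n → (Fin α → M) → V be piggyback functions satisfying the prefix property: for all j, i and all u, v : Fin α → M, if u k = v k for every k < j then g j i u = g j i v. Define the piggybacked code C : (Fin α → M) → Fin n → (Fin α → V) by C u i j = c (u j) i + g j i u. Then for every set S ⊆ Fin n, if the restricted base map m ↦ (c m i)_{i ∈ S} is injective, then the restricted piggybacked map u ↦ (C u i)_{i ∈ S} is injective. -/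
/-- Piggybacking preserves decodability: if the base code `c` is decodable from the
set of nodes `S` (i.e. the restricted encoding map is injective), then so is the
piggybacked code `C`. -/
theorem piggyback_preserves_decodability
    {M V : Type*} [AddCommGroup V] {n : ℕ} (hn : 1 ≤ n)
    (c : M → Fin n → V) {α : ℕ} (hα : 1 ≤ α)
    (g : Fin α → Fin n → (Fin α → M) → V)
    (hg : ∀ (j : Fin α) (i : Fin n) (u v : Fin α → M),
      (∀ k : Fin α, k < j → u k = v k) → g j i u = g j i v)
    (C : (Fin α → M) → Fin n → Fin α → V)
    (hC : ∀ u i j, C u i j = c (u j) i + g j i u)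
    (S : Set (Fin n))
    (hbase : Function.Injective (fun m : M => fun i : S => c m (i : Fin n))) :
    Function.Injective (fun u : Fin α → M => fun i : S => C u (i : Fin n)) := by
  intro u v h
  simp only at h
  have key : ∀ N : ℕ, ∀ j : Fin α, j.val = N → u j = v j := by
    intro N
    induction N using Nat.strong_induction_on with
    | _ N ih =>
      intro j hj
      have hpre : ∀ k : Fin α, k < j → u k = v k := by
        intro k hk
        exact ih k.val (hj ▸ hk) k rfl
      apply hbase
      funext i
      have := congrFun (congrFun h i) j
      rw [hC, hC, hg j i u v hpre] at this
      simpa using this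
  funext j
  exact key j.val j rfl
end

section
/- Let M be a finite type of messages, V an additive commutative group, n ≥ 1, c : M → Fin n → V a base code, α ≥ 1, and g : Fin α → Fin n → (Fin α → M) → V piggyback functions satisfying the prefix property (g j i u depends only on u restricted to indices k < j). Let C u i j = c (u j) i + g j i u be the piggybacked code. Then for every set S ⊆ Fin n, the number of distinct values of the restricted piggybacked map u ↦ (C u i)_{i ∈ S} over all u : Fin α → M is at least the α-th power of the number of distinct values of the restricted base map m ↦ (c m i)_{i ∈ S} over all m : M. (Finite operational form of the paper's Theorem 1: piggybacking does not decrease the amount of information stored in any subset of nodes.) -/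
/-- Finite operational form of Theorem 1: the number of distinct values stored on any
subset `S` of nodes under the piggybacked code is at least the α-th power of the number
of distinct values stored on `S` under the base code. -/
theorem piggyback_information_not_decreased
    {M V : Type*} [Fintype M] [AddCommGroup V] {n : ℕ} (hn : 1 ≤ n)
    (c : M → Fin n → V) {α : ℕ} (hα : 1 ≤ α)
    (g : Fin α → Fin n → (Fin α → M) → V)
    (hg : ∀ (j : Fin α) (i : Fin n) (u v : Fin α → M),
      (∀ k : Fin α, k < j → u k = v k) → g j i u = g j i v)
    (C : (Fin α → M) → Fin n → Fin α → V)
    (hC : ∀ u i j, C u i j = c (u j) i + g j i u)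
    (S : Set (Fin n)) :
    (Nat.card (Set.range (fun m : M => fun i : S => c m (i : Fin n)))) ^ α ≤
      Nat.card (Set.range (fun u : Fin α → M => fun i : S => C u (i : Fin n))) := by
  classical
  set b : M → (S → V) := fun m i => c m (i : Fin n) with hb
  set F : (Fin α → M) → (S → (Fin α → V)) := fun u i => fun j => C u (i : Fin n) j with hF
  -- range of restricted piggyback map equals range of F (just reassociate)
  have hR : Set.range (fun u : Fin α → M => fun i : S => C u (i : Fin n)) = Set.range F := rfl
  rw [hR]
  -- section of b on its range
  have sec_ex : ∀ y : Set.range b, ∃ m : M, b m = y := fun y => y.2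
  choose sec hsec using sec_ex
  -- key injectivity
  have key : Function.Injective (fun w : Fin α → Set.range b =>
      (⟨F (fun j => sec (w j)), Set.mem_range_self _⟩ : Set.range F)) := by
    intro w w' hww
    have hFuv : F (fun j => sec (w j)) = F (fun j => sec (w' j)) := congrArg Subtype.val hww
    set u : Fin α → M := fun j => sec (w j)
    set v : Fin α → M := fun j => sec (w' j)
    have step : ∀ N : ℕ, ∀ j : Fin α, j.val < N → u j = v j := by
      intro N
      induction N with
      | zero => intro j h; omega
      | succ N ih =>
        intro j hj
        have hgj : ∀ i : Fin n, g j i u = g j i v := fun i =>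
          hg j i u v (fun k hk => ih k (lt_of_lt_of_le (Fin.lt_def.mp hk) (Nat.lt_succ_iff.mp hj)))
        have hbj : b (u j) = b (v j) := by
          funext i
          have h1 : C u (i : Fin n) j = C v (i : Fin n) j := congrFun (congrFun hFuv i) j
          rw [hC, hC, hgj] at h1
          exact add_right_cancel h1
        have : (w j : S → V) = (w' j : S → V) := by
          rw [← hsec (w j), ← hsec (w' j)]; exact hbj
        show sec (w j) = sec (w' j)
        rw [Subtype.ext this]
    funext j
    have : (w j : S → V) = (w' j : S → V) := by
      rw [← hsec (w j), ← hsec (w' j)]; exact congrArg b (step α j j.isLt)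
    exact Subtype.ext this
  have hfin1 : (Set.range b).Finite := Set.finite_range _
  have hfin2 : (Set.range F).Finite := Set.finite_range _
  haveI : Finite (Set.range b) := hfin1
  haveI : Finite (Set.range F) := hfin2
  calc (Nat.card (Set.range b)) ^ α
      = Nat.card (Fin α → Set.range b) := by
        rw [Nat.card_fun, Nat.card_eq_fintype_card (α := Fin α), Fintype.card_fin]
    _ ≤ Nat.card (Set.range F) := Nat.card_le_card_of_injective _ key
end

section
/- Let M be a type of messages, V an additive commutative group, n ≥ k ≥ 1, and c : M → Fin n → V a base code that is MDS in the sense that for every S : Finset (Fin n) with S.card = k, the map m ↦ (c m i)_{i ∈ S} is injective. Let α ≥ 1 and let g : Fin α → Fin n → (Fin α → M) → V be piggyback functions satisfying the prefix property, and let C u i j = c (u j) i + g j i u be the piggybacked code. Then the piggybacked code is MDS: for every S : Finset (Fin n) with S.card = k, the map u ↦ (C u i)_{i ∈ S} is injective. (Paper's Corollary: piggybacking an MDS code preserves the MDS property.) -/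
/-- Piggybacking an MDS code preserves the MDS property. -/
theorem piggyback_preserves_MDS
    {M V : Type*} [AddCommGroup V] {n k : ℕ} (hk : 1 ≤ k) (hkn : k ≤ n)
    (c : M → Fin n → V)
    (hMDS : ∀ S : Finset (Fin n), S.card = k →
      Function.Injective (fun m : M => fun i : S => c m (i : Fin n)))
    {α : ℕ} (hα : 1 ≤ α)
    (g : Fin α → Fin n → (Fin α → M) → V)
    (hg : ∀ (j : Fin α) (i : Fin n) (u v : Fin α → M),
      (∀ k' : Fin α, k' < j → u k' = v k') → g j i u = g j i v)
    (C : (Fin α → M) → Fin n → Fin α → V)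
    (hC : ∀ u i j, C u i j = c (u j) i + g j i u) :
    ∀ S : Finset (Fin n), S.card = k →
      Function.Injective (fun u : Fin α → M => fun i : S => C u (i : Fin n)) := by
  intro S hS u v huv
  have key : ∀ N, ∀ j : Fin α, j.val < N → u j = v j := by
    intro N
    induction N with
    | zero => intro j h; omega
    | succ N ih =>
      intro j hj
      have hgeq : ∀ i : Fin n, g j i u = g j i v := fun i =>
        hg j i u v (fun k' hk' => ih k' (by omega))
      apply hMDS S hS
      funext i
      have h1 : C u (i : Fin n) j = C v (i : Fin n) j := by
        have := congrFun huv i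
        exact congrFun this j
      simp only [hC, hgeq] at h1
      simpa using add_right_cancel h1
  exact funext fun j => key (j.val + 1) j (Nat.lt_succ_self _)
end

section
/- Let M be a type of messages, V an additive commutative group with decidable equality, n ≥ 1, c : M → Fin n → V a base code, and d a natural number such that for all m ≠ m' in M the Hamming distance between the codewords (c m i)_{i} and (c m' i)_{i} (as elements of Fin n → V) is at least d. Let α ≥ 1, g : Fin α → Fin n → (Fin α → M) → V be piggyback functions satisfying the prefix property, and C u i j = c (u j) i + g j i u the piggybacked code, whose codewords are elements of Fin n → (Fin α → V). Then for all u ≠ u' in Fin α → M, the Hamming distance between (C u i)_{i} and (C u' i)_{i} is at least d. (Paper's Corollary: piggybacking a code does not decrease its minimum distance.) -/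
/-- Piggybacking does not decrease the minimum (Hamming) distance of the code. -/
theorem piggyback_preserves_min_distance
    {M V : Type*} [AddCommGroup V] [DecidableEq V] {n : ℕ} (hn : 1 ≤ n)
    (c : M → Fin n → V) (d : ℕ)
    (hdist : ∀ m m' : M, m ≠ m' →
      d ≤ hammingDist (fun i : Fin n => c m i) (fun i : Fin n => c m' i))
    {α : ℕ} (hα : 1 ≤ α)
    (g : Fin α → Fin n → (Fin α → M) → V)
    (hg : ∀ (j : Fin α) (i : Fin n) (u v : Fin α → M),
      (∀ k : Fin α, k < j → u k = v k) → g j i u = g j i v)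
    (C : (Fin α → M) → Fin n → Fin α → V)
    (hC : ∀ u i j, C u i j = c (u j) i + g j i u) :
    ∀ u u' : Fin α → M, u ≠ u' →
      d ≤ hammingDist (fun i : Fin n => C u i) (fun i : Fin n => C u' i) := by
  intro u u' huu
  classical
  -- the set of instances where u and u' differ is nonempty
  have hne : ∃ j : Fin α, u j ≠ u' j := by
    by_contra h
    push_neg at h
    exact huu (funext h)
  -- take the minimal such instance
  obtain ⟨j, hj, hjmin⟩ := Finset.exists_min_image (Finset.univ.filter fun j => u j ≠ u' j)
    id (by obtain ⟨j, hj⟩ := hne; exact ⟨j, Finset.mem_filter.mpr ⟨Finset.mem_univ _, hj⟩⟩)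
  have hjne : u j ≠ u' j := (Finset.mem_filter.mp hj).2
  have hprefix : ∀ k : Fin α, k < j → u k = u' k := by
    intro k hk
    by_contra hk'
    exact absurd (hjmin k (Finset.mem_filter.mpr ⟨Finset.mem_univ _, hk'⟩)) (not_le.mpr hk)
  -- compare Hamming distances
  refine le_trans (hdist (u j) (u' j) hjne) ?_
  unfold hammingDist
  apply Finset.card_le_card
  intro i hi
  simp only [Finset.mem_filter, Finset.mem_univ, true_and] at hi ⊢
  intro hCeq
  apply hi
  have := congrFun hCeq j
  rw [hC, hC, hg j i u u' hprefix] at this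
  exact add_right_cancel this
end

section
/- Let M be a type of messages, V an additive commutative group, n ≥ 1, c : M → Fin n → V a base code, α ≥ 1, g : Fin α → Fin n → (Fin α → M) → V piggyback functions satisfying the prefix property, and C u i j = c (u j) i + g j i u the piggybacked code. Let W be a type and for each node i let T i : (Fin α → V) → W be an injective map (an invertible per-node transformation of the stored data). Then for every set S ⊆ Fin n for which the restricted base map m ↦ (c m i)_{i ∈ S} is injective, the map u ↦ (T i (C u i))_{i ∈ S} is injective. (Framework claim: piggybacking followed by arbitrary invertible transformations of the data within each individual node preserves decodability from every set of nodes from which the base code allowed decoding.) -/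
/-- Piggybacking followed by arbitrary invertible (injective) per-node transformations
of the stored data preserves decodability from every set of nodes from which the base
code allowed decoding. -/
theorem piggyback_with_node_transform_preserves_decodability
    {M V W : Type*} [AddCommGroup V] {n : ℕ} (hn : 1 ≤ n)
    (c : M → Fin n → V) {α : ℕ} (hα : 1 ≤ α)
    (g : Fin α → Fin n → (Fin α → M) → V)
    (hg : ∀ (j : Fin α) (i : Fin n) (u v : Fin α → M),
      (∀ k : Fin α, k < j → u k = v k) → g j i u = g j i v)
    (C : (Fin α → M) → Fin n → Fin α → V)
    (hC : ∀ u i j, C u i j = c (u j) i + g j i u)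
    (T : Fin n → (Fin α → V) → W)
    (hT : ∀ i : Fin n, Function.Injective (T i))
    (S : Set (Fin n))
    (hbase : Function.Injective (fun m : M => fun i : S => c m (i : Fin n))) :
    Function.Injective
      (fun u : Fin α → M => fun i : S => T (i : Fin n) (C u (i : Fin n))) := by
  intro u v huv
  have hCeq : ∀ i : S, C u (i : Fin n) = C v (i : Fin n) := by
    intro i
    exact hT (i : Fin n) (congrFun huv i)
  have key : ∀ N : ℕ, ∀ j : Fin α, (j : ℕ) < N → u j = v j := by
    intro N
    induction N with
    | zero => intro j hj; omega
    | succ N ih =>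
      intro j hj
      have hgeq : ∀ i : Fin n, g j i u = g j i v :=
        fun i => hg j i u v (fun k hk => ih k (by omega))
      apply hbase
      funext i
      have h1 := congrFun (hCeq i) j
      rw [hC, hC, hgeq] at h1
      simpa using h1
  funext j
  exact key α j j.isLt
end

section
/- Let F be a commutative ring, and fix natural numbers N, μ, k, d, e. Let P_x, P_y : Matrix (Fin N) (Fin μ) F, let R : Matrix (Fin μ) (Fin μ) F, let S : Matrix (Fin e) (Fin d) F, and for each systematic node index i : Fin k let Q_x i : Matrix (Fin μ) (Fin d) F and Q_y i : Matrix (Fin μ) (Fin e) F. Assume R * (Q_x i) = (Q_y i) * S for every i. Then for every i : Fin k and all row vectors a, b : Fin N → F, the base-code repair data satisfies the identity vecMul (vecMul b P_x) (Q_x i) = vecMul (vecMul b P_x + vecMul a (P_y * R)) (Q_x i) - vecMul (vecMul (vecMul a P_y) (Q_y i)) S; i.e., the vector bᵀP_x Q_x^{(i)} passed by node (k+x) under the base-code repair of systematic node i is recoverable from the symbol (bᵀP_x + aᵀP_y R) Q_x^{(i)} passed by the piggybacked node and the symbol aᵀP_y Q_y^{(i)} passed by node (k+y). (Paper's Lemma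 on repairing parities in existing codes.) -/
open Matrix

/-- Paper's Lemma on repairing parities: if `R * Q_x i = Q_y i * S` for all systematic
nodes `i`, then the repair data `bᵀ P_x Q_x^{(i)}` of the base code can be recovered
from the piggybacked symbol `(bᵀ P_x + aᵀ P_y R) Q_x^{(i)}` and `aᵀ P_y Q_y^{(i)}`. -/
theorem piggyback_parity_repair_lemma
    {F : Type*} [CommRing F] {N μ k d e : ℕ}
    (Px Py : Matrix (Fin N) (Fin μ) F)
    (R : Matrix (Fin μ) (Fin μ) F)
    (S : Matrix (Fin e) (Fin d) F)
    (Qx : Fin k → Matrix (Fin μ) (Fin d) F)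
    (Qy : Fin k → Matrix (Fin μ) (Fin e) F)
    (hQ : ∀ i : Fin k, R * Qx i = Qy i * S) :
    ∀ (i : Fin k) (a b : Fin N → F),
      Matrix.vecMul (Matrix.vecMul b Px) (Qx i) =
        Matrix.vecMul (Matrix.vecMul b Px + Matrix.vecMul a (Py * R)) (Qx i) -
          Matrix.vecMul (Matrix.vecMul (Matrix.vecMul a Py) (Qy i)) S := by
  intro i a b
  simp only [Matrix.add_vecMul, Matrix.vecMul_vecMul, Matrix.mul_assoc, hQ i]
  abel
end

section
/- In the (6, 4) code over ZMod 5 of Fig. 2 (node i : Fin 4 stores (a i, b i, c i, d i); node 4 stores (Σ_i a i, Σ_i b i, Σ_i c i + Σ_i (i+1)·b i + Σ_{i∈{0,1}} (i+1)·a i, Σ_i d i); node 5 stores (Σ_{i∈{2,3}} (i+1)·a i − Σ_i (i+1)·b i, Σ_i (i+1)·b i + Σ_{i∈{0,1}} (i+1)·a i, Σ_{i∈{2,3}} (i+1)·c i − Σ_i (i+1)·d i, Σ_i (i+1)·d i + Σ_{i∈{0,1}} (i+1)·c i)), the second parity node (node 5) can be repaired by reading only 13 symbols: there exists a function φ : (ZMod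 5)¹³ → (ZMod 5)⁴ such that for all messages a, b, c, d : Fin 4 → ZMod 5, applying φ to the 13 symbols a 0, a 1, a 2, a 3, c 0, c 1, c 2, c 3, d 0, d 1, d 2, d 3, and the third symbol of node 4 (namely Σ_i c i + Σ_i (i+1)·b i + Σ_{i∈{0,1}} (i+1)·a i) yields the four symbols stored at node 5. -/
/-- Coefficient `i+1` cast into `ZMod 5`. -/
def cf (j : Fin 4) : ZMod 5 := (((j : ℕ) + 1 : ℕ) : ZMod 5)

/-- The (6,4) code of Fig. 2 over `ZMod 5`, with 4 substripes per node. -/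
def fig2Code (a b c d : Fin 4 → ZMod 5) : Fin 6 → Fin 4 → ZMod 5 :=
  fun i j =>
    if h : (i : ℕ) < 4 then
      if j = 0 then a ⟨i, h⟩ else if j = 1 then b ⟨i, h⟩
      else if j = 2 then c ⟨i, h⟩ else d ⟨i, h⟩
    else if (i : ℕ) = 4 then
      if j = 0 then ∑ m : Fin 4, a m
      else if j = 1 then ∑ m : Fin 4, b m
      else if j = 2 then
        ∑ m : Fin 4, c m + ∑ m : Fin 4, cf m * b m +
          ∑ m ∈ ({0, 1} : Finset (Fin 4)), cf m * a m
      else ∑ m : Fin 4, d m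
    else
      if j = 0 then
        ∑ m ∈ ({2, 3} : Finset (Fin 4)), cf m * a m - ∑ m : Fin 4, cf m * b m
      else if j = 1 then
        ∑ m : Fin 4, cf m * b m + ∑ m ∈ ({0, 1} : Finset (Fin 4)), cf m * a m
      else if j = 2 then
        ∑ m ∈ ({2, 3} : Finset (Fin 4)), cf m * c m - ∑ m : Fin 4, cf m * d m
      else
        ∑ m : Fin 4, cf m * d m + ∑ m ∈ ({0, 1} : Finset (Fin 4)), cf m * c m

/-- In the Fig. 2 code, the second parity node (node 5) can be repaired by reading
only 13 symbols: the symbols of `a`, `c`, `d` and the third symbol of node 4. -/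
theorem fig2_parity_repair_thirteen_symbols :
    ∃ φ : (Fin 13 → ZMod 5) → Fin 4 → ZMod 5,
      ∀ a b c d : Fin 4 → ZMod 5,
        φ ![a 0, a 1, a 2, a 3, c 0, c 1, c 2, c 3, d 0, d 1, d 2, d 3,
            ∑ m : Fin 4, c m + ∑ m : Fin 4, cf m * b m +
              ∑ m ∈ ({0, 1} : Finset (Fin 4)), cf m * a m] =
          fun j : Fin 4 => fig2Code a b c d 5 j := by
  refine ⟨fun x =>
    ![3 * x 2 + 4 * x 3 - (x 12 - (x 4 + x 5 + x 6 + x 7) - (x 0 + 2 * x 1)),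
      x 12 - (x 4 + x 5 + x 6 + x 7),
      3 * x 6 + 4 * x 7 - (x 8 + 2 * x 9 + 3 * x 10 + 4 * x 11),
      x 8 + 2 * x 9 + 3 * x 10 + 4 * x 11 + x 4 + 2 * x 5], ?_⟩
  intro a b c d
  set T := ∑ m : Fin 4, c m + ∑ m : Fin 4, cf m * b m +
      ∑ m ∈ ({0, 1} : Finset (Fin 4)), cf m * a m with hT
  funext j
  fin_cases j
  · show (3 * a 2 + 4 * a 3 - (T - (c 0 + c 1 + c 2 + c 3) - (a 0 + 2 * a 1)) : ZMod 5) =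
      fig2Code a b c d 5 0
    simp [fig2Code, cf, Fin.sum_univ_four, show ((5:Fin 6):ℕ) = 5 from rfl,
      show ((3:Fin 4):ℕ) = 3 from rfl, hT]
    ring
  · show (T - (c 0 + c 1 + c 2 + c 3) : ZMod 5) = fig2Code a b c d 5 1
    simp [fig2Code, cf, Fin.sum_univ_four, show ((5:Fin 6):ℕ) = 5 from rfl,
      show ((3:Fin 4):ℕ) = 3 from rfl, hT]
    ring
  · show (3 * c 2 + 4 * c 3 - (d 0 + 2 * d 1 + 3 * d 2 + 4 * d 3) : ZMod 5) =
      fig2Code a b c d 5 2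
    simp [fig2Code, cf, Fin.sum_univ_four, show ((5:Fin 6):ℕ) = 5 from rfl,
      show ((3:Fin 4):ℕ) = 3 from rfl]
    ring
  · show (d 0 + 2 * d 1 + 3 * d 2 + 4 * d 3 + c 0 + 2 * c 1 : ZMod 5) = fig2Code a b c d 5 3
    simp [fig2Code, cf, Fin.sum_univ_four, show ((5:Fin 6):ℕ) = 5 from rfl,
      show ((3:Fin 4):ℕ) = 3 from rfl]
    ring
end

section
/- In the piggybacked (4, 2) code over ZMod 5 of Fig. 8(b) (node 1 stores (a₁, b₁, c₁, d₁); node 2 stores (a₂, b₂, c₂, d₂); node 3 stores (3a₁ + 2b₁ + a₂, b₁ + 2a₂ + 3b₂, 3c₁ + 2d₁ + c₂ + (3a₁ + 4b₁ + 2a₂), d₁ + 2c₂ + 3d₂ + (b₁ + 2a₂ + b₂)); node 4 stores (3a₁ + 4b₁ + 2a₂, b₁ + 2a₂ + b₂, 3c₁ + 4d₁ + 2c₂, d₁ + 2c₂ + d₂)), the parity node 4 can be repaired by reading only 6 symbols: there exists a function φ : (ZMod 5)⁶ → (ZMod 5)⁴ such that for all a₁, a₂, b₁, b₂, c₁, c₂,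 d₁, d₂ : ZMod 5, φ(c₁, c₂, d₁, d₂, 3c₁ + 2d₁ + c₂ + (3a₁ + 4b₁ + 2a₂), d₁ + 2c₂ + 3d₂ + (b₁ + 2a₂ + b₂)) equals the four symbols stored at node 4. -/
private lemma vec6_five {α : Type*} (x0 x1 x2 x3 x4 x5 : α) :
    (![x0, x1, x2, x3, x4, x5] : Fin 6 → α) 5 = x5 := rfl

private lemma vec6_four {α : Type*} (x0 x1 x2 x3 x4 x5 : α) :
    (![x0, x1, x2, x3, x4, x5] : Fin 6 → α) 4 = x4 := rfl

/-- In the piggybacked (4,2) code of Fig. 8(b) over `ZMod 5`, the parity node 4 can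
be repaired by reading only 6 symbols: `c₁, c₂, d₁, d₂` and the two piggybacked
symbols of node 3. -/
theorem fig8b_parity_repair_six_symbols :
    ∃ φ : (Fin 6 → ZMod 5) → Fin 4 → ZMod 5,
      ∀ a₁ a₂ b₁ b₂ c₁ c₂ d₁ d₂ : ZMod 5,
        φ ![c₁, c₂, d₁, d₂,
            3 * c₁ + 2 * d₁ + c₂ + (3 * a₁ + 4 * b₁ + 2 * a₂),
            d₁ + 2 * c₂ + 3 * d₂ + (b₁ + 2 * a₂ + b₂)] =
          ![3 * a₁ + 4 * b₁ + 2 * a₂, b₁ + 2 * a₂ + b₂,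
            3 * c₁ + 4 * d₁ + 2 * c₂, d₁ + 2 * c₂ + d₂] := by
  refine ⟨fun v => ![v 4 - (3 * v 0 + 2 * v 2 + v 1),
                    v 5 - (v 2 + 2 * v 1 + 3 * v 3),
                    3 * v 0 + 4 * v 2 + 2 * v 1,
                    v 2 + 2 * v 1 + v 3], ?_⟩
  intro a₁ a₂ b₁ b₂ c₁ c₂ d₁ d₂
  funext i
  fin_cases i <;> simp [vec6_five, vec6_four] <;> ring
end

section
/- (Piggybacking Design 1, repair of a systematic node not in the last group.) Let F be a field, r ≥ 2, t ≥ 1, and k = r·t. Let p₀, p_mid, p_last : Fin k → F be encoding vectors, and let ℓ : Fin k lie in a group G_j = {i : j·t ≤ i < (j+1)·t} for some j ≤ r−2. Assume p₀ ℓ ≠ 0 and p_last ℓ ≠ 0. Then there exists a function φ taking k + t field elements to F × F such that for all messages a, b : Fin k → F, applying φ to the values (b i for each i ≠ ℓ), Σ_{i} p₀ i · b i, Σ_{i} p_mid i · b i + Σ_{i ∈ G_j} p_last i · a i, and (a i for each i ∈ G_j with i ≠ ℓ) yields (a ℓ, b ℓ). That is, in the Design-1 piggybacked code the failed systematic node ℓ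 is repaired by reading and downloading only k + t symbols. -/
/-!
The first parity symbol of the `b`-instance involves `b ℓ` with the nonzero coefficient
`p₀ ℓ` and otherwise only downloaded symbols, so it yields `b ℓ`. Then the whole
`b`-part of the piggybacked parity symbol is known; subtracting it leaves the piggyback
`∑_{i ∈ G_j} plast i * a i`, in which `a ℓ` is the only unknown and has the nonzero
coefficient `plast ℓ`.
-/

open Finset

theorem Finset.sum_filter_eq_add_sum_subtype_ne {ι M : Type*} [Fintype ι] [DecidableEq ι]
    [AddCommMonoid M] {p : ι → Prop} [DecidablePred p] (f : ι → M) {a : ι} (ha : p a) :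
    ∑ i ∈ univ.filter p, f i = f a + ∑ i : {i // p i ∧ i ≠ a}, f i := by
  rw [← add_sum_erase _ f ((mem_filter_univ a).2 ha),
    sum_subtype (p := fun i => p i ∧ i ≠ a) _ fun i => by simp [and_comm]]

theorem sub_div_eq_of_eq_mul_add {F : Type*} [Field F] {s c x r : F} (hs : s = c * x + r)
    (hc : c ≠ 0) : (s - r) / c = x := by
  rw [hs, add_sub_cancel_right, mul_div_cancel_left₀ _ hc]

section Design1

variable {ι F : Type*} [Fintype ι] [DecidableEq ι] [Field F]

def design1Repair (p₀ pmid plast : ι → F) (ℓ : ι) (group : ι → Prop) [DecidablePred group]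
    (bRest : {i // i ≠ ℓ} → F) (parity₀ parityPiggy : F)
    (aGroupRest : {i // group i ∧ i ≠ ℓ} → F) : F × F :=
  let bℓ := (parity₀ - ∑ i : {i // i ≠ ℓ}, p₀ i * bRest i) / p₀ ℓ
  ((parityPiggy - (pmid ℓ * bℓ + ∑ i : {i // i ≠ ℓ}, pmid i * bRest i) -
      ∑ i : {i // group i ∧ i ≠ ℓ}, plast i * aGroupRest i) / plast ℓ, bℓ)

theorem design1Repair_spec (p₀ pmid plast : ι → F) {ℓ : ι} {group : ι → Prop}
    [DecidablePred group] (hℓ : group ℓ) (hp₀ : p₀ ℓ ≠ 0) (hpl : plast ℓ ≠ 0)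
    (a b : ι → F) :
    design1Repair p₀ pmid plast ℓ group (fun i => b i) (∑ i, p₀ i * b i)
        (∑ i, pmid i * b i + ∑ i ∈ univ.filter group, plast i * a i) (fun i => a i) =
      (a ℓ, b ℓ) := by
  have hb := sub_div_eq_of_eq_mul_add
    (Fintype.sum_eq_add_sum_subtype_ne (fun i => p₀ i * b i) ℓ) hp₀
  have ha := sub_div_eq_of_eq_mul_add
    (sum_filter_eq_add_sum_subtype_ne (fun i => plast i * a i) hℓ) hpl
  simp only [design1Repair, hb, ← Fintype.sum_eq_add_sum_subtype_ne (fun i => pmid i * b i),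
    add_sub_cancel_left, ha]

end Design1

theorem design1_repair_systematic_not_last_group_general
    {F : Type*} [Field F] {t : ℕ}
    {k : ℕ}
    (p₀ pmid plast : Fin k → F) (ℓ : Fin k) (j : ℕ)
    (hℓ₁ : j * t ≤ (ℓ : ℕ)) (hℓ₂ : (ℓ : ℕ) < (j + 1) * t)
    (hp₀ : p₀ ℓ ≠ 0) (hpl : plast ℓ ≠ 0) :
    ∃ φ : ({i : Fin k // i ≠ ℓ} → F) → F → F →
        ({i : Fin k // (j * t ≤ (i : ℕ) ∧ (i : ℕ) < (j + 1) * t) ∧ i ≠ ℓ} → F) →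
        F × F,
      ∀ a b : Fin k → F,
        φ (fun i => b i) (∑ i, p₀ i * b i)
          (∑ i, pmid i * b i +
            ∑ i ∈ Finset.univ.filter
                (fun i : Fin k => j * t ≤ (i : ℕ) ∧ (i : ℕ) < (j + 1) * t),
              plast i * a i)
          (fun i => a i) = (a ℓ, b ℓ) :=
  ⟨design1Repair p₀ pmid plast ℓ _, design1Repair_spec p₀ pmid plast ⟨hℓ₁, hℓ₂⟩ hp₀ hpl⟩

/-- Piggybacking Design 1, repair of a systematic node `ℓ` not in the last group:
`ℓ` is repaired by reading and downloading only `k + t` symbols, namely the `k - 1`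
symbols `b i` (`i ≠ ℓ`), the first parity symbol of the `b`-instance, the
piggybacked parity symbol whose piggyback is supported on the group of `ℓ`, and the
`t - 1` symbols `a i` for the other members `i` of the group of `ℓ`. -/
theorem design1_repair_systematic_not_last_group
    {F : Type*} [Field F] {r t : ℕ} (hr : 2 ≤ r) (ht : 1 ≤ t)
    {k : ℕ} (hk : k = r * t)
    (p₀ pmid plast : Fin k → F) (ℓ : Fin k) (j : ℕ) (hj : j ≤ r - 2)
    (hℓ₁ : j * t ≤ (ℓ : ℕ)) (hℓ₂ : (ℓ : ℕ) < (j + 1) * t)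
    (hp₀ : p₀ ℓ ≠ 0) (hpl : plast ℓ ≠ 0) :
    ∃ φ : ({i : Fin k // i ≠ ℓ} → F) → F → F →
        ({i : Fin k // (j * t ≤ (i : ℕ) ∧ (i : ℕ) < (j + 1) * t) ∧ i ≠ ℓ} → F) →
        F × F,
      ∀ a b : Fin k → F,
        φ (fun i => b i) (∑ i, p₀ i * b i)
          (∑ i, pmid i * b i +
            ∑ i ∈ Finset.univ.filter
                (fun i : Fin k => j * t ≤ (i : ℕ) ∧ (i : ℕ) < (j + 1) * t),
              plast i * a i)
          (fun i => a i) = (a ℓ, b ℓ) :=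
  design1_repair_systematic_not_last_group_general p₀ pmid plast ℓ j hℓ₁ hℓ₂ hp₀ hpl
end
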